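/- Completeness of AX↓ for the class M↓ of halting causal simulation models: every L-formula true in every model whose machine has at least one halting execution on every input tape under every intervention is a theorem of AX↓; equivalently, every AX↓-consistent L-formula is satisfied by some model in M↓. -/

import Mathlib

set_option maxHeartbeats 1000000

namespace CausalSim

/-! ### Propositional syntax -/

/-- Propositional formulas over atoms `X_i`. -/
inductive PropForm : Type
  | atom : ℕ → PropForm
  | neg : PropForm → PropForm
  | and : PropForm → PropForm → PropForm
  | or : PropForm → PropForm → PropForm
  deriving DecidableEq

def PropForm.imp (φ ψ : PropForm) : PropForm := .or (.neg φ) ψ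

/-- A fixed propositional contradiction. -/
def PropForm.bot : PropForm := .and (.atom 0) (.neg (.atom 0))

/-- Its negation, a fixed tautology. -/
def PropForm.top : PropForm := PropForm.neg PropForm.bot

def PropForm.eval (v : ℕ → Bool) : PropForm → Bool
  | .atom i => v i
  | .neg φ => !(φ.eval v)
  | .and φ ψ => φ.eval v && ψ.eval v
  | .or φ ψ => φ.eval v || ψ.eval v

/-- `L_int`: ordered conjunctions of literals over distinct atoms, represented by
the list of literals `(index, polarity)`, with strictly increasing indices.
The empty list represents the empty intervention `⊤`. -/
abbrev Lint : Type := {l : List (ℕ × Bool) // l.Chain' fun p q => p.1 < q.1}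

instance : DecidableEq Lint := fun a b =>
  decidable_of_iff (a.1 = b.1) Subtype.ext_iff.symm

def Lint.top : Lint := ⟨[], List.isChain_nil⟩

/-- The partial assignment (intervention) specified by `α ∈ L_int`. -/
def Lint.itv (α : Lint) : ℕ → Option Bool :=
  fun i => (α.1.find? fun p => p.1 == i).map Prod.snd

def PropForm.lit (p : ℕ × Bool) : PropForm :=
  if p.2 then .atom p.1 else .neg (.atom p.1)

/-- `α ∈ L_int` regarded as a propositional formula (conjunction of its literals;
`⊤` for the empty intervention). -/
def Lint.toProp (α : Lint) : PropForm :=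
  match α.1 with
  | [] => PropForm.top
  | p :: rest => rest.foldl (fun acc q => .and acc (.lit q)) (.lit p)

/-! ### The language `L` -/

/-- The causal simulation language `L`: propositional formulas over the atoms
`X ∪ L_cond`, where a conditional `[α]β` has antecedent `α ∈ L_int` and
consequent `β ∈ L_prop`. -/
inductive LForm : Type
  | atom : ℕ → LForm
  | cond : Lint → PropForm → LForm
  | neg : LForm → LForm
  | and : LForm → LForm → LForm
  | or : LForm → LForm → LForm

def LForm.imp (φ ψ : LForm) : LForm := .or (.neg φ) ψ

def LForm.iff (φ ψ : LForm) : LForm := .and (φ.imp ψ) (ψ.imp φ)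

/-- `⟨α⟩β`, an abbreviation for `¬[α]¬β`. -/
def LForm.dia (α : Lint) (β : PropForm) : LForm := .neg (.cond α (.neg β))

/-- The embedding of `L_prop` into `L`. -/
def PropForm.toL : PropForm → LForm
  | .atom i => .atom i
  | .neg φ => .neg φ.toL
  | .and φ ψ => .and φ.toL ψ.toL
  | .or φ ψ => .or φ.toL ψ.toL

/-- Evaluation of an `L`-formula treating the elements of `X ∪ L_cond` as
propositional atoms: `v` assigns values to the `X`-atoms and `w` to the
conditional atoms. -/
def LForm.evalA (v : ℕ → Bool) (w : Lint → PropForm → Bool) : LForm → Bool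
  | .atom i => v i
  | .cond α β => w α β
  | .neg φ => !(φ.evalA v w)
  | .and φ ψ => φ.evalA v w && ψ.evalA v w
  | .or φ ψ => φ.evalA v w || ψ.evalA v w

/-- Substitution instances of propositional tautologies over the atoms `X ∪ L_cond`. -/
def Tautology (φ : LForm) : Prop := ∀ v w, φ.evalA v w = true

/-! ### Turing machines over a Boolean variable tape, and interventions -/

/-- A transition rule `((q, read), (q', write, moveRight))`. -/
abbrev Rule : Type := (ℕ × Bool) × (ℕ × Bool × Bool)

/-- A (possibly non-deterministic) Turing machine, given by its finite list of
transition rules; the initial control state is `0`, and the machine halts in a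
configuration to which no rule applies. -/
abbrev Machine : Type := List Rule

/-- A configuration: control state, head position, and tape contents. -/
structure Cfg where
  q : ℕ
  pos : ℕ
  tape : ℕ → Bool

/-- The initial tape: the intervention `itv` first sets the intervened variables. -/
def initTape (itv : ℕ → Option Bool) (x : ℕ → Bool) : ℕ → Bool :=
  fun i => (itv i).getD (x i)

/-- Writing under an intervention: writes to intervened variables are ignored. -/
def writeTape (itv : ℕ → Option Bool) (t : ℕ → Bool) (pos : ℕ) (b : Bool) : ℕ → Bool :=
  if itv pos = none then Function.update t pos b else t

def movePos (p : ℕ) (right : Bool) : ℕ := if right then p + 1 else p - 1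

/-- One step of the intervened machine `I_itv(T)`. -/
def MStep (T : Machine) (itv : ℕ → Option Bool) (c c' : Cfg) : Prop :=
  ∃ r ∈ T, r.1 = (c.q, c.tape c.pos) ∧
    c' = ⟨r.2.1, movePos c.pos r.2.2.2, writeTape itv c.tape c.pos r.2.2.1⟩

/-- A halted configuration: no rule applies. -/
def Halted (T : Machine) (c : Cfg) : Prop := ∀ r ∈ T, r.1 ≠ (c.q, c.tape c.pos)

/-- The set of result tapes of halting executions of `I_itv(T)` on input `x`. -/
def Outputs (T : Machine) (itv : ℕ → Option Bool) (x : ℕ → Bool) : Set (ℕ → Bool) :=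
  {y | ∃ c : Cfg, Relation.ReflTransGen (MStep T itv) ⟨0, 0, initTape itv x⟩ c ∧
        Halted T c ∧ c.tape = y}

/-- Deterministic machines: at most one rule per (state, read symbol). -/
def Machine.Det (T : Machine) : Prop := ∀ r₁ ∈ T, ∀ r₂ ∈ T, r₁.1 = r₂.1 → r₁ = r₂

/-- State descriptions have finite support. -/
def FinSupp (x : ℕ → Bool) : Prop := {i | x i = true}.Finite

/-- Machines with at least one halting execution on every input tape under
every intervention. -/
def Machine.TotalHalting (T : Machine) : Prop :=
  ∀ (α : Lint) (x : ℕ → Bool), FinSupp x → (Outputs T α.itv x).Nonempty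

/-- Finite state machines: over all inputs and interventions, the machine reads and
writes only boundedly many tape variables. -/
def Machine.FiniteState (T : Machine) : Prop :=
  ∃ B : ℕ, ∀ (α : Lint) (x : ℕ → Bool), FinSupp x →
    ∀ c : Cfg, Relation.ReflTransGen (MStep T α.itv) ⟨0, 0, initTape α.itv x⟩ c → c.pos < B

/-! ### Causal simulation models and satisfaction -/

/-- A causal simulation model: a machine together with a state description with
finite support. -/
structure CSM where
  T : Machine
  x : ℕ → Bool
  fin : FinSupp x

/-- Satisfaction, generically in the map sending each intervention `α ∈ L_int`
to the set of output tapes of the corresponding halting executions. -/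
def SatGen (O : Lint → Set (ℕ → Bool)) (x : ℕ → Bool) : LForm → Prop
  | .atom i => x i = true
  | .cond α β => ∀ y ∈ O α, β.eval y = true
  | .neg φ => ¬ SatGen O x φ
  | .and φ ψ => SatGen O x φ ∧ SatGen O x ψ
  | .or φ ψ => SatGen O x φ ∨ SatGen O x ψ

/-- `(T, x) ⊨ φ`. -/
def CSM.Sat (M : CSM) (φ : LForm) : Prop :=
  SatGen (fun α => Outputs M.T α.itv M.x) M.x φ

/-- The class `M` of all causal simulation models. -/
def inM (_ : CSM) : Prop := True

/-- The class `M_det`. -/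
def inMdet (M : CSM) : Prop := M.T.Det

/-- The class `M↓`. -/
def inMhalt (M : CSM) : Prop := M.T.TotalHalting

/-- The class `M↓_det`. -/
def inMdethalt (M : CSM) : Prop := M.T.Det ∧ M.T.TotalHalting

/-! ### The axiomatic systems -/

/-- Derivability from: propositional tautologies (over atoms `X ∪ L_cond`),
the axioms `R` and `K`, extra axioms `extra`, modus ponens, and the rule `RW`. -/
inductive Deriv (extra : LForm → Prop) : LForm → Prop
  | taut {φ} : Tautology φ → Deriv extra φ
  | extra {φ} : extra φ → Deriv extra φ
  | axR (α : Lint) : Deriv extra (.cond α α.toProp)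
  | axK (α : Lint) (β γ : PropForm) :
      Deriv extra ((LForm.cond α (β.imp γ)).imp ((LForm.cond α β).imp (.cond α γ)))
  | mp {φ ψ} : Deriv extra (φ.imp ψ) → Deriv extra φ → Deriv extra ψ
  | rw (α : Lint) {β β' : PropForm} :
      Deriv extra (β.imp β').toL → Deriv extra ((LForm.cond α β).imp (.cond α β'))

/-- Instances of axiom `F : ⟨α⟩β → [α]β`. -/
def axF (φ : LForm) : Prop :=
  ∃ (α : Lint) (β : PropForm), φ = (LForm.dia α β).imp (.cond α β)

/-- Instances of axiom `D : [α]β → ⟨α⟩β`. -/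
def axD (φ : LForm) : Prop :=
  ∃ (α : Lint) (β : PropForm), φ = (LForm.cond α β).imp (LForm.dia α β)

def AX : LForm → Prop := Deriv fun _ => False
def AXdet : LForm → Prop := Deriv axF
def AXhalt : LForm → Prop := Deriv axD
def AXdethalt : LForm → Prop := Deriv fun φ => axF φ ∨ axD φ

end CausalSim
namespace CausalSim

/-! ### Normal form clauses and selection functions -/

def bigAndL : List LForm → LForm
  | [] => PropForm.top.toL
  | φ :: rest => rest.foldl .and φ

def bigOrL : List LForm → LForm
  | [] => PropForm.bot.toL
  | φ :: rest => rest.foldl .or φ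

def bigOrP : List PropForm → PropForm
  | [] => PropForm.bot
  | φ :: rest => rest.foldl .or φ

/-- The data of a conjunctive clause
`π ∧ ⋀_{i∈I}([α_i] ⋁_{j∈J_i} β_{i,j}) ∧ ⋀_{k∈K} ⟨α_k⟩ β_k`. -/
structure Clause where
  pi : PropForm
  boxes : List (Lint × List Lint)
  dias : List (Lint × Lint)

/-- The `α_i` (for distinct `i ∈ I`) are pairwise distinct. -/
def Clause.wf (δ : Clause) : Prop := (δ.boxes.map Prod.fst).Pairwise (· ≠ ·)

def Clause.toLForm (δ : Clause) : LForm :=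
  .and δ.pi.toL (.and
    (bigAndL (δ.boxes.map fun p => .cond p.1 (bigOrP (p.2.map Lint.toProp))))
    (bigAndL (δ.dias.map fun p => LForm.dia p.1 p.2.toProp)))

/-- `S_δ`: the antecedents occurring in the clause `δ`. -/
def Clause.ants (δ : Clause) : List Lint := δ.boxes.map Prod.fst ++ δ.dias.map Prod.fst

/-- A list of literals is propositionally consistent. -/
def LitsConsistent (l : List (ℕ × Bool)) : Prop :=
  ∀ i, ¬((i, true) ∈ l ∧ (i, false) ∈ l)

/-- `γ` is the `L_int`-equivalent of the conjunction of the literals `l`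
(reordering and deletion of repeated literals). -/
def Lint.IsEquivOf (γ : Lint) (l : List (ℕ × Bool)) : Prop := γ.1.toFinset = l.toFinset

/-- `f` is a selection function for the clause `δ`. -/
def IsSelection (δ : Clause) (f : Lint → List Lint) : Prop :=
  (∀ α ∈ δ.ants, α ∉ δ.dias.map Prod.fst → f α = []) ∧
  (∀ α ∈ δ.dias.map Prod.fst, ∃ sel : Lint × Lint → Lint,
    f α = (δ.dias.filter fun p => decide (p.1 = α)).map sel ∧
    ∀ p ∈ δ.dias, p.1 = α →
      (∀ J, (α, J) ∈ δ.boxes →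
        ∃ j ∈ J, LitsConsistent (α.1 ++ p.2.1 ++ j.1) ∧
          (sel p).IsEquivOf (α.1 ++ p.2.1 ++ j.1)) ∧
      (α ∉ δ.boxes.map Prod.fst →
        LitsConsistent (α.1 ++ p.2.1) ∧ (sel p).IsEquivOf (α.1 ++ p.2.1)))

/-! ### Sizes -/

def PropForm.size : PropForm → ℕ
  | .atom i => i + 1
  | .neg φ => φ.size + 1
  | .and φ ψ => φ.size + ψ.size + 1
  | .or φ ψ => φ.size + ψ.size + 1

def Lint.size (α : Lint) : ℕ := (α.1.map fun p => p.1 + 1).sum + 1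

/-- `|φ|`, the number of symbols of `φ` (an occurrence of the atom `X_i`
contributing `i + 1` symbols). -/
def LForm.size : LForm → ℕ
  | .atom i => i + 1
  | .cond α β => α.size + β.size + 1
  | .neg φ => φ.size + 1
  | .and φ ψ => φ.size + ψ.size + 1
  | .or φ ψ => φ.size + ψ.size + 1

def PropForm.maxAtom : PropForm → ℕ
  | .atom i => i
  | .neg φ => φ.maxAtom
  | .and φ ψ => max φ.maxAtom ψ.maxAtom
  | .or φ ψ => max φ.maxAtom ψ.maxAtom

def Lint.maxAtom (α : Lint) : ℕ := (α.1.map Prod.fst).foldr max 0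

/-- `N`: the largest index of an atom occurring in `φ`. -/
def LForm.maxAtom : LForm → ℕ
  | .atom i => i
  | .cond α β => max α.maxAtom β.maxAtom
  | .neg φ => φ.maxAtom
  | .and φ ψ => max φ.maxAtom ψ.maxAtom
  | .or φ ψ => max φ.maxAtom ψ.maxAtom

/-- `S_φ`: the antecedents of the conditionals occurring in `φ`. -/
def LForm.ants : LForm → List Lint
  | .atom _ => []
  | .cond α _ => [α]
  | .neg φ => φ.ants
  | .and φ ψ => φ.ants ++ ψ.ants
  | .or φ ψ => φ.ants ++ ψ.ants

/-! ### The programming language `PL` -/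

/-- Assignment statements `X_i := c`, `X_i := X_j`, `X_i := !X_j`. -/
inductive BAssign : Type
  | const (i : ℕ) (c : Bool)
  | copy (i j : ℕ)
  | negcopy (i j : ℕ)
  deriving DecidableEq

def BAssign.target : BAssign → ℕ
  | .const i _ => i
  | .copy i _ => i
  | .negcopy i _ => i

def BAssign.maxVar : BAssign → ℕ
  | .const i _ => i
  | .copy i j => max i j
  | .negcopy i j => max i j

/-- Tests `X_i = c`, `X_i = X_j`, `X_i != X_j`, and conjunctions thereof. -/
inductive BTest : Type
  | eqc (i : ℕ) (c : Bool)
  | eqv (i j : ℕ)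
  | nev (i j : ℕ)
  | and (t₁ t₂ : BTest)
  deriving DecidableEq

def BTest.eval (s : ℕ → Bool) : BTest → Bool
  | .eqc i c => s i == c
  | .eqv i j => s i == s j
  | .nev i j => !(s i == s j)
  | .and t₁ t₂ => t₁.eval s && t₂.eval s

def BTest.size : BTest → ℕ
  | .eqc _ _ => 1
  | .eqv _ _ => 1
  | .nev _ _ => 1
  | .and t₁ t₂ => t₁.size + t₂.size + 1

/-- Programs of `PL`: the empty program, assignments, sequencing,
if-then-else, nondeterministic choice, and the unconditional infinite loop. -/
inductive Prog : Type
  | empty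
  | assign (a : BAssign)
  | seq (p q : Prog)
  | ite (c : BTest) (p q : Prog)
  | choose (ps : List Prog)
  | loop

mutual
  /-- The length of a program. -/
  def Prog.size : Prog → ℕ
    | .empty => 1
    | .assign _ => 1
    | .seq p q => p.size + q.size + 1
    | .ite c p q => c.size + p.size + q.size + 1
    | .choose ps => Prog.sizeList ps + 1
    | .loop => 1
  def Prog.sizeList : List Prog → ℕ
    | [] => 0
    | p :: ps => p.size + Prog.sizeList ps
end

/-- The effect of an assignment under an intervention: writes to intervened
variables are ignored. -/
def applyAssign (itv : ℕ → Option Bool) (a : BAssign) (s : ℕ → Bool) : ℕ → Bool :=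
  let v : Bool := match a with
    | .const _ c => c
    | .copy _ j => s j
    | .negcopy _ j => !(s j)
  if itv a.target = none then Function.update s a.target v else s

/-- Big-step semantics of `PL` under an intervention. A `loop`-statement has no
halting execution, and a `choose`-statement executes one of its branches. -/
inductive BigStep (itv : ℕ → Option Bool) : Prog → (ℕ → Bool) → (ℕ → Bool) → Prop
  | empty (s) : BigStep itv .empty s s
  | assign (a s) : BigStep itv (.assign a) s (applyAssign itv a s)
  | seq {p q s t u} : BigStep itv p s t → BigStep itv q t u → BigStep itv (.seq p q) s u
  | iteT {c p q s t} : c.eval s = true → BigStep itv p s t → BigStep itv (.ite c p q) s t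
  | iteF {c p q s t} : c.eval s = false → BigStep itv q s t → BigStep itv (.ite c p q) s t
  | choose {ps p s t} : p ∈ ps → BigStep itv p s t → BigStep itv (.choose ps) s t

/-- The set of result tapes of halting executions of the intervened program. -/
def ProgOutputs (P : Prog) (itv : ℕ → Option Bool) (x : ℕ → Bool) : Set (ℕ → Bool) :=
  {y | BigStep itv P (initTape itv x) y}

/-- Satisfaction `(T_P, x) ⊨ φ` for the machine compiled from the program `P`
(whose executions are those of `P`). -/
def ProgSat (P : Prog) (x : ℕ → Bool) (φ : LForm) : Prop :=
  SatGen (fun α => ProgOutputs P α.itv x) x φ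

end CausalSim
namespace CausalSim

/-! ### The canonical program fragment `PL†_{φ,C}` -/

def seqList : List Prog → Prog
  | [] => .empty
  | p :: ps => .seq p (seqList ps)

/-- Listing 1: `IsIntervened(X_i)` (with offset parameter `N`): performs the
toggle check for `X_i`, records the result in `X_{i+N}`, uses `X_{i+2N}` as a
temporary variable, and leaves `X_i` unchanged. -/
def isIntervened (N i : ℕ) : Prog :=
  seqList [
    .assign (.copy (i + N) i),
    .assign (.negcopy i i),
    .assign (.copy (i + 2 * N) i),
    .ite (.eqv (i + 2 * N) (i + N))
      (.assign (.const (i + N) true)) (.assign (.const (i + N) false)),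
    .assign (.negcopy i i)]

/-- One copy of `IsIntervened(X_i)` for each `1 ≤ i ≤ N`. -/
def isIntervenedAll (N : ℕ) : Prog :=
  seqList ((List.range' 1 N).map (isIntervened N))

/-- Listing 2: `HoldsFromIntervention(α)`: the condition checking that exactly
the variables occurring in `α` are marked as intervened and carry the values
specified by `α`'s literals. -/
def holdsFromItv (N : ℕ) (α : Lint) : BTest :=
  ((List.range' 1 N).map fun i =>
    match α.itv i with
    | some b => BTest.and (.eqc i b) (.eqc (i + N) true)
    | none => BTest.eqc (i + N) false).foldr .and (.eqv 0 0)

/-- A sequence of assignment statements. -/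
def assignSeq (l : List BAssign) : Prog := seqList (l.map Prog.assign)

/-- An admissible assignment sequence: assignments only to (pairwise distinct)
variables `X_i` with `1 ≤ i ≤ N`, mentioning only variables of index `≤ N`. -/
def GoodAssigns (N : ℕ) (l : List BAssign) : Prop :=
  (l.map BAssign.target).Nodup ∧ ∀ a ∈ l, a.maxVar ≤ N ∧ 1 ≤ a.target

/-- The admissible bodies of the `if`-statements of a fragment program:
(a) a `choose`-statement with at most `C·|φ|` branches, each an admissible
assignment sequence; (b) a single admissible assignment sequence; or
(c) a single `loop`-statement — with (a) excluded for the deterministic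
dialects and (c) excluded for the halting dialects. -/
def IfBody (C N sz : ℕ) (allowChoose allowLoop : Bool) (p : Prog) : Prop :=
  (allowChoose = true ∧ ∃ branches : List (List BAssign),
      p = .choose (branches.map assignSeq) ∧ branches.length ≤ C * sz ∧
      ∀ l ∈ branches, GoodAssigns N l) ∨
  (∃ l : List BAssign, p = assignSeq l ∧ GoodAssigns N l) ∨
  (allowLoop = true ∧ p = .loop)

/-- Membership in the fragment `PL†_{φ,C}`: one copy of `IsIntervened(X_i)` for
each `1 ≤ i ≤ N`, followed by at most one `if`-statement with condition
`HoldsFromIntervention(α)` for each antecedent `α` occurring in `φ`, with an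
admissible body. -/
def InFrag (C : ℕ) (φ : LForm) (allowChoose allowLoop : Bool) (P : Prog) : Prop :=
  ∃ ifs : List (Lint × Prog),
    (ifs.map Prod.fst).Nodup ∧
    (∀ q ∈ ifs, q.1 ∈ φ.ants ∧ IfBody C φ.maxAtom φ.size allowChoose allowLoop q.2) ∧
    P = .seq (isIntervenedAll φ.maxAtom)
      (seqList (ifs.map fun q => Prog.ite (holdsFromItv φ.maxAtom q.1) q.2 .empty))

/-! ### Encodings into binary strings -/

def encNat (n : ℕ) : List Bool := List.replicate n true ++ [false]

def encListGen (enc : α → List Bool) (l : List α) : List Bool :=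
  encNat l.length ++ l.flatMap enc

def encLit (p : ℕ × Bool) : List Bool := encNat p.1 ++ [p.2]

def encLint (α : Lint) : List Bool := encListGen encLit α.1

def encProp : PropForm → List Bool
  | .atom i => encNat 0 ++ encNat i
  | .neg φ => encNat 1 ++ encProp φ
  | .and φ ψ => encNat 2 ++ encProp φ ++ encProp ψ
  | .or φ ψ => encNat 3 ++ encProp φ ++ encProp ψ

/-- A standard encoding of `L`-formulas as binary strings. -/
def encLForm : LForm → List Bool
  | .atom i => encNat 0 ++ encNat i
  | .cond α β => encNat 1 ++ encLint α ++ encProp β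
  | .neg φ => encNat 2 ++ encLForm φ
  | .and φ ψ => encNat 3 ++ encLForm φ ++ encLForm ψ
  | .or φ ψ => encNat 4 ++ encLForm φ ++ encLForm ψ

def encAssign : BAssign → List Bool
  | .const i c => encNat 0 ++ encNat i ++ [c]
  | .copy i j => encNat 1 ++ encNat i ++ encNat j
  | .negcopy i j => encNat 2 ++ encNat i ++ encNat j

def encTest : BTest → List Bool
  | .eqc i c => encNat 0 ++ encNat i ++ [c]
  | .eqv i j => encNat 1 ++ encNat i ++ encNat j
  | .nev i j => encNat 2 ++ encNat i ++ encNat j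
  | .and t₁ t₂ => encNat 3 ++ encTest t₁ ++ encTest t₂

mutual
  /-- A standard encoding of programs as binary strings. -/
  def encProg : Prog → List Bool
    | .empty => encNat 0
    | .assign a => encNat 1 ++ encAssign a
    | .seq p q => encNat 2 ++ encProg p ++ encProg q
    | .ite c p q => encNat 3 ++ encTest c ++ encProg p ++ encProg q
    | .choose ps => encNat 4 ++ encNat ps.length ++ encProgList ps
    | .loop => encNat 5
  def encProgList : List Prog → List Bool
    | [] => []
    | p :: ps => encProg p ++ encProgList ps
end

/-! ### Polynomial time, NP, and NP-completeness -/

/-- The identity finite encoding of binary strings. -/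
def listBoolFinEncoding : Computability.Encoding (List Bool) Bool where
  encode := id
  decode := fun l => some l
  decode_encode := fun _ => rfl

/-- `f` is computable in polynomial time (by a Turing machine). -/
def PolyTimeFun (f : List Bool → List Bool) : Prop :=
  Nonempty (Turing.TM2ComputableInPolyTime listBoolFinEncoding.encode listBoolFinEncoding.encode f)

/-- Polynomial-time many-one reducibility. -/
def PolyReducible (L₁ L₂ : List Bool → Prop) : Prop :=
  ∃ f : List Bool → List Bool, PolyTimeFun f ∧ ∀ s, L₁ s ↔ L₂ (f s)

/-- A self-delimiting pairing of binary strings. -/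
def encPairStr (a b : List Bool) : List Bool := encNat a.length ++ a ++ b

/-- The class NP, via polynomial-time verifiers of polynomial-length certificates. -/
def InNP (L : List Bool → Prop) : Prop :=
  ∃ (V : List Bool → Bool) (p : Polynomial ℕ),
    PolyTimeFun (fun s => [V s]) ∧
    ∀ s, L s ↔ ∃ w : List Bool, w.length ≤ p.eval s.length ∧ V (encPairStr s w) = true

/-- NP-completeness with respect to polynomial-time many-one reductions. -/
def NPComplete (L : List Bool → Prop) : Prop :=
  InNP L ∧ ∀ L' : List Bool → Prop, InNP L' → PolyReducible L' L

/-- The language Sim-Sat for a class of models: encodings of `L`-formulas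
satisfied by some model in the class. -/
def SimSatLang (cls : CSM → Prop) : List Bool → Prop :=
  fun s => ∃ φ : LForm, s = encLForm φ ∧ ∃ M : CSM, cls M ∧ M.Sat φ

/-! ### Miscellaneous helpers -/

/-- The state description with support the list `xs`. -/
def stateOf (xs : List ℕ) : ℕ → Bool := fun i => decide (i ∈ xs)

theorem finSupp_stateOf (xs : List ℕ) : FinSupp (stateOf xs) := by
  apply Set.Finite.subset (List.finite_toSet xs)
  intro i hi
  simpa [stateOf] using hi

/-- The model given by a machine and (the support of) a state description. -/
def csmOf (T : Machine) (xs : List ℕ) : CSM := ⟨T, stateOf xs, finSupp_stateOf xs⟩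

/-- The singleton intervention `X_n := 1`. -/
def lintSingle (n : ℕ) : Lint := ⟨[(n, true)], List.isChain_singleton _⟩

/-- The set `Ω` of the non-compactness proposition, for `f : ℕ → ℕ`. -/
def Omega (f : ℕ → ℕ) : Set LForm :=
  {ψ | ∃ n, ψ = LForm.neg (.atom n)} ∪
  {ψ | ∃ n, ψ = LForm.dia (lintSingle n) (.atom (f n))} ∪
  {ψ | ∃ n m, m ≠ n ∧ m ≠ f n ∧ ψ = LForm.cond (lintSingle n) (.neg (.atom m))}

end CausalSim

namespace CausalSim

/-!
Consistency of `φ` yields, by a finite canonical-model argument, a valuation of the atoms and of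
the conditionals `[α]β` occurring in `φ` that makes `φ` true and is coherent: for every
antecedent `α`, the formula `α` together with the consequents `β` marked true is satisfiable
(axioms `R`, `K`, rule `RW` and axiom `D`), and stays satisfiable when the negation of any
consequent marked false is added (`R`, `K`, `RW`).

A machine realising such a valuation first recovers the intervention: it flips each of the
first `N` cells, steps away and back, and re-reads it; the flip did not take exactly on the
intervened cells. It then writes, nondeterministically, one of finitely many patterns on the
non-intervened cells: a model of the positive consequents of `α`, and one model refuting each
negative consequent. As there is always at least one pattern, it halts under every intervention.
-/

section Propositional

@[simp] lemma evalA_toL (φ : PropForm) (v w) : φ.toL.evalA v w = φ.eval v := by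
  induction φ <;> simp [PropForm.toL, LForm.evalA, PropForm.eval, *]

@[simp] lemma eval_bot (v : ℕ → Bool) : PropForm.bot.eval v = false := by
  simp [PropForm.bot, PropForm.eval]

lemma eval_lit (p : ℕ × Bool) (y : ℕ → Bool) :
    (PropForm.lit p).eval y = true ↔ y p.1 = p.2 := by
  rcases p with ⟨i, _ | _⟩ <;> simp [PropForm.lit, PropForm.eval]

lemma eval_foldr_and (S : List PropForm) (a : PropForm) (y : ℕ → Bool) :
    (S.foldr .and a).eval y = true ↔ a.eval y = true ∧ ∀ β ∈ S, β.eval y = true := by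
  induction S with
  | nil => simp
  | cons β S ih =>
    simp only [List.foldr_cons, PropForm.eval, Bool.and_eq_true, ih, List.forall_mem_cons]
    tauto

lemma eval_foldl_lit (l : List (ℕ × Bool)) (a : PropForm) (y : ℕ → Bool) :
    (l.foldl (fun acc q => .and acc (.lit q)) a).eval y = true ↔
      a.eval y = true ∧ ∀ p ∈ l, y p.1 = p.2 := by
  induction l generalizing a with
  | nil => simp
  | cons p l ih =>
    simp only [List.foldl_cons, ih, PropForm.eval, Bool.and_eq_true, eval_lit,
      List.forall_mem_cons]
    tauto

lemma eval_toProp (α : Lint) (y : ℕ → Bool) :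
    α.toProp.eval y = true ↔ ∀ p ∈ α.1, y p.1 = p.2 := by
  rcases α with ⟨_ | ⟨p, rest⟩, _⟩
  · simp [Lint.toProp, PropForm.top, PropForm.eval]
  · simp only [Lint.toProp, eval_foldl_lit, eval_lit, List.forall_mem_cons]

lemma eval_congr {φ : PropForm} {v v' : ℕ → Bool} (h : ∀ i ≤ φ.maxAtom, v i = v' i) :
    φ.eval v = φ.eval v' := by
  induction φ with
  | atom i => exact h i le_rfl
  | neg φ ih => simp only [PropForm.eval, ih h]
  | and φ ψ ihφ ihψ | or φ ψ ihφ ihψ =>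
    simp only [PropForm.eval, PropForm.maxAtom] at h ⊢
    rw [ihφ fun i hi => h i (le_max_of_le_left hi), ihψ fun i hi => h i (le_max_of_le_right hi)]

def PropForm.Satisfiable (γ : PropForm) : Prop := ∃ y : ℕ → Bool, γ.eval y = true

end Propositional

section Derivations

variable {extra : LForm → Prop}

lemma taut_dne (A : LForm) : Tautology ((LForm.neg (.neg A)).imp A) := fun v w => by
  simp only [LForm.imp, LForm.evalA]; grind

lemma taut_id (A : LForm) : Tautology (A.imp A) := fun v w => by
  simp only [LForm.imp, LForm.evalA]; grind

lemma taut_mono (A B C : LForm) :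
    Tautology ((A.imp B).imp ((C.imp A).imp (C.imp B))) := fun v w => by
  simp only [LForm.imp, LForm.evalA]; grind

lemma taut_swap (A B C : LForm) :
    Tautology ((A.imp (B.imp C)).imp (B.imp (A.imp C))) := fun v w => by
  simp only [LForm.imp, LForm.evalA]; grind

lemma taut_trans (A B C : LForm) :
    Tautology ((A.imp B).imp ((B.imp C).imp (A.imp C))) := fun v w => by
  simp only [LForm.imp, LForm.evalA]; grind

lemma taut_pull (X P Z C : LForm) :
    Tautology ((X.imp (P.imp Z)).imp ((C.imp X).imp (P.imp (C.imp Z)))) := fun v w => by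
  simp only [LForm.imp, LForm.evalA]; grind

lemma taut_contra (A B : LForm) :
    Tautology ((A.imp B).imp ((A.imp (.neg B)).imp (A.imp PropForm.bot.toL))) := fun v w => by
  simp only [LForm.imp, LForm.evalA]; grind

lemma Deriv.trans {A B C : LForm} (h₁ : Deriv extra (A.imp B)) (h₂ : Deriv extra (B.imp C)) :
    Deriv extra (A.imp C) :=
  .mp (.mp (.taut (taut_trans A B C)) h₁) h₂

lemma Deriv.swap {A B C : LForm} (h : Deriv extra (A.imp (B.imp C))) :
    Deriv extra (B.imp (A.imp C)) :=
  .mp (.taut (taut_swap A B C)) h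

lemma Deriv.rw_of_eval (α : Lint) {β β' : PropForm}
    (h : ∀ v, β.eval v = true → β'.eval v = true) :
    Deriv extra ((LForm.cond α β).imp (.cond α β')) := by
  refine .rw α (.taut fun v w => ?_)
  simp only [evalA_toL, PropForm.imp, PropForm.eval, Bool.or_eq_true, Bool.not_eq_true']
  cases hb : β.eval v
  · exact .inl rfl
  · exact .inr (h v hb)

lemma Deriv.of_foldr_imp {ψ : LForm} (l : List LForm) (h : Deriv extra (l.foldr .imp ψ))
    (hl : ∀ c ∈ l, Deriv extra c) : Deriv extra ψ := by
  induction l with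
  | nil => exact h
  | cons c l ih =>
    rw [List.forall_mem_cons] at hl
    exact ih (.mp h hl.1) hl.2

lemma evalA_foldr_imp (l : List LForm) (ψ : LForm) (v w) :
    (l.foldr LForm.imp ψ).evalA v w = true ↔
      ((∀ c ∈ l, c.evalA v w = true) → ψ.evalA v w = true) := by
  induction l with
  | nil => simp
  | cons c l ih =>
    simp only [List.foldr_cons, LForm.imp, LForm.evalA, Bool.or_eq_true, Bool.not_eq_true', ih,
      List.forall_mem_cons]
    cases c.evalA v w <;> simp

def condChain (α : Lint) (S : List PropForm) (t : LForm) : LForm :=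
  (S.map (LForm.cond α)).foldr .imp t

lemma evalA_condChain (α : Lint) (S : List PropForm) (t : LForm) (v w) :
    (condChain α S t).evalA v w = true ↔
      ((∀ β ∈ S, w α β = true) → t.evalA v w = true) := by
  simp [condChain, evalA_foldr_imp, LForm.evalA]

lemma Deriv.condChain_mono (α : Lint) (S : List PropForm) {A B : LForm}
    (h : Deriv extra (A.imp B)) : Deriv extra ((condChain α S A).imp (condChain α S B)) := by
  induction S with
  | nil => exact h
  | cons β S ih => exact .mp (.taut (taut_mono _ _ _)) ih

lemma Deriv.condChain_pull (α : Lint) (S : List PropForm) (P Z : LForm) :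
    Deriv extra ((condChain α S (P.imp Z)).imp (P.imp (condChain α S Z))) := by
  induction S with
  | nil => exact .taut (taut_id _)
  | cons β S ih => exact .mp (.taut (taut_pull _ _ _ _)) ih

lemma Deriv.condChain_collect (α : Lint) (S : List PropForm) :
    Deriv extra (condChain α S (.cond α (S.foldr .and α.toProp))) := by
  induction S with
  | nil => exact .axR α
  | cons β S ih =>
    set F := S.foldr PropForm.and α.toProp
    have hK : Deriv extra ((LForm.cond α β).imp ((LForm.cond α F).imp (.cond α (.and β F)))) :=
      (Deriv.rw_of_eval α fun v hv => by simp [PropForm.imp, PropForm.eval, hv]).trans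
        (.axK α F (.and β F))
    exact .mp (.condChain_pull α S _ _) (.mp (.condChain_mono α S hK.swap) ih)

end Derivations

section Coherence

def LForm.condPairs : LForm → List (Lint × PropForm)
  | .atom _ => []
  | .cond α β => [(α, β)]
  | .neg φ => φ.condPairs
  | .and φ ψ | .or φ ψ => φ.condPairs ++ ψ.condPairs

lemma maxAtom_le_of_mem_condPairs {φ : LForm} {α : Lint} {β : PropForm}
    (h : (α, β) ∈ φ.condPairs) : α.maxAtom ≤ φ.maxAtom ∧ β.maxAtom ≤ φ.maxAtom := by
  induction φ with
  | atom => simp [LForm.condPairs] at h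
  | cond =>
    simp only [LForm.condPairs, List.mem_singleton, Prod.mk.injEq] at h
    obtain ⟨rfl, rfl⟩ := h
    exact ⟨le_max_left _ _, le_max_right _ _⟩
  | neg φ ih => exact ih h
  | and φ ψ ihφ ihψ | or φ ψ ihφ ihψ =>
    simp only [LForm.condPairs, List.mem_append] at h
    simp only [LForm.maxAtom, le_max_iff]
    rcases h with h | h
    · exact ⟨.inl (ihφ h).1, .inl (ihφ h).2⟩
    · exact ⟨.inr (ihψ h).1, .inr (ihψ h).2⟩

def LForm.condAnts (φ : LForm) : List Lint := φ.condPairs.map Prod.fst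

def consequents (φ : LForm) (α : Lint) : List PropForm :=
  (φ.condPairs.filter fun p => p.1 = α).map Prod.snd

lemma mem_consequents {φ : LForm} {α : Lint} {β : PropForm} :
    β ∈ consequents φ α ↔ (α, β) ∈ φ.condPairs := by
  simp [consequents, and_comm]

def posConj (φ : LForm) (w : Lint → PropForm → Bool) (α : Lint) : PropForm :=
  ((consequents φ α).filter (w α)).foldr .and α.toProp

def Coherent (φ : LForm) (w : Lint → PropForm → Bool) : Prop :=
  ∀ α ∈ φ.condAnts, (posConj φ w α).Satisfiable ∧
    ∀ β ∈ consequents φ α, w α β = false → (PropForm.and (.neg β) (posConj φ w α)).Satisfiable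

open Classical in
/-- Derivable formulas that together exclude every incoherent valuation: for each antecedent `α`
and set `S` of its consequents, `[α]S` is refuted if `S ∪ {α}` is unsatisfiable, and `[α]S`
implies `[α]β` if `S ∪ {α}` entails `β`. -/
noncomputable def coherenceAxioms (φ : LForm) : List LForm :=
  φ.condAnts.flatMap fun α => (consequents φ α).sublists.flatMap fun S =>
    (if (S.foldr .and α.toProp).Satisfiable then [] else [condChain α S PropForm.bot.toL]) ++
    (consequents φ α).filterMap fun β =>
      if (PropForm.and (.neg β) (S.foldr .and α.toProp)).Satisfiable then none
      else some (condChain α S (.cond α β))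

lemma mem_coherenceAxioms {φ : LForm} {c : LForm} :
    c ∈ coherenceAxioms φ ↔ ∃ α ∈ φ.condAnts, ∃ S ∈ (consequents φ α).sublists,
      (¬(S.foldr .and α.toProp).Satisfiable ∧ c = condChain α S PropForm.bot.toL) ∨
      ∃ β ∈ consequents φ α, ¬(PropForm.and (.neg β) (S.foldr .and α.toProp)).Satisfiable ∧
        c = condChain α S (.cond α β) := by
  simp only [coherenceAxioms, List.mem_flatMap, List.mem_append, List.mem_filterMap]
  refine exists_congr fun α => and_congr_right fun _ => exists_congr fun S =>
    and_congr_right fun _ => or_congr ?_ (exists_congr fun β => and_congr_right fun _ => ?_)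
  · split_ifs with h <;> simp [h]
  · split_ifs with h <;> simp [h, eq_comm]

lemma Deriv.condChain_bot {α : Lint} {S : List PropForm}
    (h : ¬(S.foldr .and α.toProp).Satisfiable) : Deriv axD (condChain α S PropForm.bot.toL) := by
  set F := S.foldr PropForm.and α.toProp
  have hbox : Deriv axD ((LForm.cond α F).imp (.cond α (.neg F))) :=
    .rw_of_eval α fun v hv => absurd ⟨v, hv⟩ h
  have hD : Deriv axD ((LForm.cond α F).imp (.neg (.cond α (.neg F)))) := .extra ⟨α, F, rfl⟩
  exact .mp (.condChain_mono α S (.mp (.mp (.taut (taut_contra _ _)) hbox) hD))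
    (.condChain_collect α S)

lemma Deriv.condChain_cond {extra : LForm → Prop} {α : Lint} {S : List PropForm} {β : PropForm}
    (h : ¬(PropForm.and (.neg β) (S.foldr .and α.toProp)).Satisfiable) :
    Deriv extra (condChain α S (.cond α β)) := by
  refine .mp (.condChain_mono α S (.rw_of_eval α fun v hv => ?_)) (.condChain_collect α S)
  by_contra hβ
  exact h ⟨v, by simp_all [PropForm.eval]⟩

lemma Deriv.of_mem_coherenceAxioms {φ c : LForm} (h : c ∈ coherenceAxioms φ) :
    Deriv axD c := by
  obtain ⟨α, -, S, -, ⟨hS, rfl⟩ | ⟨β, -, hβ, rfl⟩⟩ := mem_coherenceAxioms.1 h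
  · exact .condChain_bot hS
  · exact .condChain_cond hβ

lemma coherent_of_forall_coherenceAxioms {φ : LForm} {v : ℕ → Bool}
    {w : Lint → PropForm → Bool} (h : ∀ c ∈ coherenceAxioms φ, c.evalA v w = true) :
    Coherent φ w := by
  intro α hα
  set S := (consequents φ α).filter (w α)
  have hS : S ∈ (consequents φ α).sublists := List.mem_sublists.2 List.filter_sublist
  have hchain {t : LForm} (ht : condChain α S t ∈ coherenceAxioms φ) : t.evalA v w = true :=
    (evalA_condChain α S t v w).1 (h _ ht) fun β hβ => (List.mem_filter.1 hβ).2
  refine ⟨by_contra fun hpos => ?_, fun β hβ hwβ => by_contra fun hneg => ?_⟩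
  · simpa using hchain (mem_coherenceAxioms.2 ⟨α, hα, S, hS, .inl ⟨hpos, rfl⟩⟩)
  · simpa [LForm.evalA, hwβ] using
      hchain (mem_coherenceAxioms.2 ⟨α, hα, S, hS, .inr ⟨β, hβ, hneg, rfl⟩⟩)

lemma exists_coherent_of_consistent {φ : LForm} (h : ¬ AXhalt (.neg φ)) :
    ∃ (v : ℕ → Bool) (w : Lint → PropForm → Bool), φ.evalA v w = true ∧ Coherent φ w := by
  by_contra! hno
  refine h (.of_foldr_imp (coherenceAxioms φ) (.taut fun v w => ?_)
    fun _ => Deriv.of_mem_coherenceAxioms)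
  rw [evalA_foldr_imp]
  intro hall
  simp only [LForm.evalA, Bool.not_eq_true']
  by_contra hφ
  exact hno v w (by simpa using hφ) (coherent_of_forall_coherenceAxioms hall)

end Coherence

section Interventions

lemma Lint.pairwise (α : Lint) : α.1.Pairwise fun p q => p.1 < q.1 :=
  List.isChain_iff_pairwise.1 α.2

lemma Lint.le_maxAtom {α : Lint} {p : ℕ × Bool} (h : p ∈ α.1) : p.1 ≤ α.maxAtom :=
  List.le_max_of_le' 0 (List.mem_map_of_mem h) le_rfl

lemma find?_fst_map_snd_eq_some_iff {l : List (ℕ × Bool)} (hl : l.Pairwise fun p q => p.1 < q.1)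
    {i : ℕ} {b : Bool} : (l.find? fun p => p.1 == i).map Prod.snd = some b ↔ (i, b) ∈ l := by
  induction hl with
  | nil => simp
  | @cons p l hp _ ih =>
    rcases p with ⟨j, c⟩
    by_cases hij : j = i
    · subst hij
      have : (j, b) ∉ l := fun hb => lt_irrefl j (hp _ hb)
      simp [this, eq_comm]
    · simp [hij, ih, Ne.symm hij]

lemma Lint.itv_eq_some_iff {α : Lint} {i : ℕ} {b : Bool} : α.itv i = some b ↔ (i, b) ∈ α.1 :=
  find?_fst_map_snd_eq_some_iff α.pairwise

lemma Lint.eq_of_itv_eq {α α' : Lint} {N : ℕ} (hα : α.maxAtom < N) (hα' : α'.maxAtom < N)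
    (h : ∀ i < N, α.itv i = α'.itv i) : α = α' := by
  have hmem : ∀ p, p ∈ α.1 ↔ p ∈ α'.1 := by
    rintro ⟨i, b⟩
    rw [← Lint.itv_eq_some_iff, ← Lint.itv_eq_some_iff]
    constructor <;> intro hs
    · rwa [← h i ((Lint.le_maxAtom (Lint.itv_eq_some_iff.1 hs)).trans_lt hα)]
    · rwa [h i ((Lint.le_maxAtom (Lint.itv_eq_some_iff.1 hs)).trans_lt hα')]
  have hnodup (β : Lint) : β.1.Nodup := β.pairwise.imp fun h => ne_of_apply_ne Prod.fst h.ne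
  exact Subtype.ext <| List.Perm.eq_of_pairwise (fun _ _ _ _ h₁ h₂ => ((h₁.trans h₂).false).elim)
    α.pairwise α'.pairwise ((List.perm_ext_iff_of_nodup (hnodup α) (hnodup α')).2 hmem)

end Interventions

section CanonicalMachine

lemma halted_iff_forall_not_mstep (itv : ℕ → Option Bool) {T : Machine} {c : Cfg} :
    Halted T c ↔ ∀ c', ¬ MStep T itv c c' := by
  constructor
  · rintro h c' ⟨r, hr, hrc, -⟩
    exact h r hr hrc
  · intro h r hr hrc
    exact h _ ⟨r, hr, hrc, rfl⟩

lemma writeTape_apply (itv : ℕ → Option Bool) (t : ℕ → Bool) (p : ℕ) (b : Bool) (m : ℕ) :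
    writeTape itv t p b m = if m = p ∧ itv p = none then b else t m := by
  unfold writeTape
  split_ifs <;> simp_all

lemma writeTape_self (itv : ℕ → Option Bool) (t : ℕ → Bool) (p : ℕ) :
    writeTape itv t p (t p) = t := by
  funext m
  rw [writeTape_apply]
  split_ifs with h
  · rw [h.1]
  · rfl

/-- Control states of the canonical machine. A cell `i` is probed by flipping it (`probe`),
stepping to cell `i + 1` and back (`away`), and re-reading it (`compare`): the flip took iff
the cell is not intervened. `sig` records the intervention on the cells probed so far;
`write j pat` writes `pat` on the cells `j, j - 1, …, 0`. -/
inductive CState : Type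
  | probe (i : ℕ) (sig : List (Option Bool))
  | away (i : ℕ) (sig : List (Option Bool)) (r : Bool)
  | compare (i : ℕ) (sig : List (Option Bool)) (r : Bool)
  | write (j : ℕ) (pat : List Bool)
  | halt
  deriving Encodable

/-- A numbering of the control states giving the start state `0` to `probe 0 []`. -/
def CState.enc (st : CState) : ℕ :=
  Equiv.swap 0 (Encodable.encode (probe 0 [])) (Encodable.encode st)

lemma CState.enc_injective : Function.Injective CState.enc :=
  (Equiv.injective _).comp Encodable.encode_injective

lemma CState.enc_probe_zero : (probe 0 []).enc = 0 := Equiv.swap_apply_right _ _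

def signatures (i : ℕ) : List (List (Option Bool)) :=
  (List.replicate i [none, some false, some true]).sections

lemma mem_signatures (sig : List (Option Bool)) : sig ∈ signatures sig.length := by
  rw [signatures, List.mem_sections]
  induction sig with
  | nil => exact .nil
  | cons a sig ih => exact .cons (by cases a <;> simp) ih

variable (N : ℕ) (outs : List (Option Bool) → List (List Bool))

def canonStates : List CState :=
  ((List.range (N + 1)).flatMap fun i => (signatures i).map (.probe i)) ++
  ((List.range N).flatMap fun i => (signatures i).flatMap fun sig =>
    [false, true].flatMap fun r => [.away i sig r, .compare i sig r]) ++
  ((List.range N).flatMap fun j => ((signatures N).flatMap outs).map (.write j))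

/-- The transitions `(next state, symbol written, move right?)` on reading a symbol. -/
def canonDelta : CState → Bool → List (CState × Bool × Bool)
  | .probe i sig, r =>
    if i < N then [(.away i sig r, !r, true)]
    else (outs sig).map fun pat => (.write (N - 1) pat, r, false)
  | .away i sig r, s => [(.compare i sig r, s, false)]
  | .compare i sig r, r' => [(.probe (i + 1) (sig ++ [if r' = r then some r else none]), r', true)]
  | .write j pat, _ =>
    [(if j = 0 then .halt else .write (j - 1) pat, pat[j]?.getD false, false)]
  | .halt, _ => []

/-- The machine that, having recovered the intervention `sig` on the cells `< N`, writes one of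
the patterns `outs sig` on the non-intervened cells `< N`. -/
def canonMachine : Machine :=
  (canonStates N outs).flatMap fun st => [false, true].flatMap fun b =>
    (canonDelta N outs st b).map fun d => ((st.enc, b), (d.1.enc, d.2.1, d.2.2))

variable {N outs}

lemma mstep_canonMachine_iff {itv : ℕ → Option Bool} {st : CState} {p : ℕ} {t : ℕ → Bool}
    {c : Cfg} : MStep (canonMachine N outs) itv ⟨st.enc, p, t⟩ c ↔
      st ∈ canonStates N outs ∧ ∃ d ∈ canonDelta N outs st (t p),
        c = ⟨d.1.enc, movePos p d.2.2, writeTape itv t p d.2.1⟩ := by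
  simp only [MStep, canonMachine, List.mem_flatMap, List.mem_map]
  constructor
  · rintro ⟨_, ⟨st', hst', b, -, d, hd, rfl⟩, hr, rfl⟩
    simp only [Prod.mk.injEq] at hr
    obtain ⟨hst, rfl⟩ := hr
    cases CState.enc_injective hst
    exact ⟨hst', d, hd, rfl⟩
  · rintro ⟨hst, d, hd, rfl⟩
    exact ⟨_, ⟨st, hst, t p, by cases t p <;> simp, d, hd, rfl⟩, rfl, rfl⟩

lemma probe_mem_canonStates {i : ℕ} {sig : List (Option Bool)} (hi : i ≤ N)
    (hsig : sig.length = i) : .probe i sig ∈ canonStates N outs := by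
  subst hsig
  simp only [canonStates, List.mem_append, List.mem_flatMap, List.mem_map, List.mem_range]
  exact .inl (.inl ⟨_, by omega, sig, mem_signatures sig, rfl⟩)

lemma away_mem_canonStates {i : ℕ} {sig : List (Option Bool)} {r : Bool} (hi : i < N)
    (hsig : sig.length = i) : .away i sig r ∈ canonStates N outs := by
  subst hsig
  simp only [canonStates, List.mem_append, List.mem_flatMap, List.mem_range]
  exact .inl (.inr ⟨_, hi, sig, mem_signatures sig, r, by cases r <;> simp⟩)

lemma compare_mem_canonStates {i : ℕ} {sig : List (Option Bool)} {r : Bool} (hi : i < N)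
    (hsig : sig.length = i) : .compare i sig r ∈ canonStates N outs := by
  subst hsig
  simp only [canonStates, List.mem_append, List.mem_flatMap, List.mem_range]
  exact .inl (.inr ⟨_, hi, sig, mem_signatures sig, r, by cases r <;> simp⟩)

lemma write_mem_canonStates {j : ℕ} {sig : List (Option Bool)} {pat : List Bool} (hj : j < N)
    (hsig : sig.length = N) (hpat : pat ∈ outs sig) : .write j pat ∈ canonStates N outs := by
  subst hsig
  simp only [canonStates, List.mem_append, List.mem_flatMap, List.mem_map, List.mem_range]
  exact .inr ⟨j, hj, pat, ⟨sig, mem_signatures sig, hpat⟩, rfl⟩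

end CanonicalMachine

section CanonicalTapes

variable (N : ℕ) (itv : ℕ → Option Bool) (x : ℕ → Bool)

def itvSig (i : ℕ) : List (Option Bool) := (List.range i).map itv

def probedTape (i : ℕ) : ℕ → Bool :=
  fun m => if m < i ∧ itv m = none then !initTape itv x m else initTape itv x m

def finalTape (pat : List Bool) : ℕ → Bool :=
  fun m => if m < N ∧ itv m = none then pat[m]?.getD false else initTape itv x m

def sweepTape (pat : List Bool) (j : ℕ) : ℕ → Bool :=
  fun m => if m ≤ j then probedTape itv x N m else finalTape N itv x pat m

lemma itvSig_succ (i : ℕ) : itvSig itv (i + 1) = itvSig itv i ++ [itv i] := by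
  simp [itvSig, List.range_succ]

lemma probedTape_zero : probedTape itv x 0 = initTape itv x := by
  funext m
  simp [probedTape]

lemma probedTape_self (i : ℕ) : probedTape itv x i i = initTape itv x i := by
  simp [probedTape]

lemma writeTape_probedTape (i : ℕ) :
    writeTape itv (probedTape itv x i) i (!initTape itv x i) = probedTape itv x (i + 1) := by
  funext m
  simp only [writeTape_apply, probedTape]
  split_ifs <;> grind

lemma probe_verdict (i : ℕ) :
    (if probedTape itv x (i + 1) i = initTape itv x i then some (initTape itv x i) else none) =
      itv i := by
  rcases h : itv i with _ | b
  · simp [probedTape, h]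
  · simp [probedTape, h, initTape]

lemma sweepTape_top (hN : 0 < N) (pat : List Bool) :
    sweepTape N itv x pat (N - 1) = probedTape itv x N := by
  funext m
  simp only [sweepTape, finalTape, probedTape]
  split_ifs <;> first | rfl | omega

lemma writeTape_sweepTape_succ (pat : List Bool) (j : ℕ) (hj : j + 1 < N) :
    writeTape itv (sweepTape N itv x pat (j + 1)) (j + 1) (pat[j + 1]?.getD false) =
      sweepTape N itv x pat j := by
  funext m
  simp only [writeTape_apply, sweepTape, finalTape, probedTape]
  split_ifs <;> grind

lemma writeTape_sweepTape_zero (hN : 0 < N) (pat : List Bool) :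
    writeTape itv (sweepTape N itv x pat 0) 0 (pat[0]?.getD false) = finalTape N itv x pat := by
  funext m
  simp only [writeTape_apply, sweepTape, finalTape, probedTape]
  split_ifs <;> grind

end CanonicalTapes

section CanonicalRun

variable (N : ℕ) {outs : List (Option Bool) → List (List Bool)} (itv : ℕ → Option Bool)
  (x : ℕ → Bool)

def probeCfg (i : ℕ) : Cfg := ⟨(CState.probe i (itvSig itv i)).enc, i, probedTape itv x i⟩

def awayCfg (i : ℕ) : Cfg :=
  ⟨(CState.away i (itvSig itv i) (initTape itv x i)).enc, i + 1, probedTape itv x (i + 1)⟩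

def compareCfg (i : ℕ) : Cfg :=
  ⟨(CState.compare i (itvSig itv i) (initTape itv x i)).enc, i, probedTape itv x (i + 1)⟩

def writeCfg (pat : List Bool) (j : ℕ) : Cfg :=
  ⟨(CState.write j pat).enc, j, sweepTape N itv x pat j⟩

def haltCfg (pat : List Bool) : Cfg := ⟨CState.halt.enc, 0, finalTape N itv x pat⟩

variable {N itv x}

lemma length_itvSig (i : ℕ) : (itvSig itv i).length = i := by simp [itvSig]

lemma probeCfg_zero : probeCfg itv x 0 = ⟨0, 0, initTape itv x⟩ := by
  simp [probeCfg, itvSig, probedTape_zero, CState.enc_probe_zero]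

lemma mstep_probeCfg_iff {i : ℕ} (hi : i < N) {c : Cfg} :
    MStep (canonMachine N outs) itv (probeCfg itv x i) c ↔ c = awayCfg itv x i := by
  rw [probeCfg, mstep_canonMachine_iff]
  simp [probe_mem_canonStates hi.le (length_itvSig i), canonDelta, hi, probedTape_self, movePos,
    writeTape_probedTape, awayCfg]

lemma mstep_awayCfg_iff {i : ℕ} (hi : i < N) {c : Cfg} :
    MStep (canonMachine N outs) itv (awayCfg itv x i) c ↔ c = compareCfg itv x i := by
  rw [awayCfg, mstep_canonMachine_iff]
  simp [away_mem_canonStates hi (length_itvSig i), canonDelta, movePos, writeTape_self,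
    compareCfg]

lemma mstep_compareCfg_iff {i : ℕ} (hi : i < N) {c : Cfg} :
    MStep (canonMachine N outs) itv (compareCfg itv x i) c ↔ c = probeCfg itv x (i + 1) := by
  rw [compareCfg, mstep_canonMachine_iff]
  simp [compare_mem_canonStates hi (length_itvSig i), canonDelta, movePos, writeTape_self,
    probe_verdict, itvSig_succ, probeCfg]

lemma mstep_probeCfg_top_iff (hN : 0 < N) {c : Cfg} :
    MStep (canonMachine N outs) itv (probeCfg itv x N) c ↔
      ∃ pat ∈ outs (itvSig itv N), c = writeCfg N itv x pat (N - 1) := by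
  rw [probeCfg, mstep_canonMachine_iff]
  simp [probe_mem_canonStates le_rfl (length_itvSig N), canonDelta, movePos, writeTape_self,
    sweepTape_top N itv x hN, writeCfg]

lemma mstep_writeCfg_succ_iff {pat : List Bool} (hpat : pat ∈ outs (itvSig itv N)) {j : ℕ}
    (hj : j + 1 < N) {c : Cfg} :
    MStep (canonMachine N outs) itv (writeCfg N itv x pat (j + 1)) c ↔
      c = writeCfg N itv x pat j := by
  rw [writeCfg, mstep_canonMachine_iff]
  simp [write_mem_canonStates hj (length_itvSig N) hpat, canonDelta, movePos,
    writeTape_sweepTape_succ N itv x pat j hj, writeCfg]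

lemma mstep_writeCfg_zero_iff {pat : List Bool} (hpat : pat ∈ outs (itvSig itv N))
    (hN : 0 < N) {c : Cfg} :
    MStep (canonMachine N outs) itv (writeCfg N itv x pat 0) c ↔ c = haltCfg N itv x pat := by
  rw [writeCfg, mstep_canonMachine_iff]
  simp [write_mem_canonStates hN (length_itvSig N) hpat, canonDelta, movePos,
    writeTape_sweepTape_zero N itv x hN pat, haltCfg]

lemma not_mstep_haltCfg {pat : List Bool} {c : Cfg} :
    ¬ MStep (canonMachine N outs) itv (haltCfg N itv x pat) c := by
  simp [haltCfg, mstep_canonMachine_iff, canonDelta]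

variable (N outs itv x) in
inductive CanonReachable : Cfg → Prop
  | probe {i : ℕ} : i ≤ N → CanonReachable (probeCfg itv x i)
  | away {i : ℕ} : i < N → CanonReachable (awayCfg itv x i)
  | compare {i : ℕ} : i < N → CanonReachable (compareCfg itv x i)
  | write {pat : List Bool} {j : ℕ} : pat ∈ outs (itvSig itv N) → j < N →
      CanonReachable (writeCfg N itv x pat j)
  | halt {pat : List Bool} : pat ∈ outs (itvSig itv N) → CanonReachable (haltCfg N itv x pat)

lemma CanonReachable.mstep (hN : 0 < N) {c c' : Cfg} (hc : CanonReachable N outs itv x c)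
    (hs : MStep (canonMachine N outs) itv c c') : CanonReachable N outs itv x c' := by
  cases hc with
  | @probe i hi =>
    rcases hi.lt_or_eq with hi | rfl
    · rw [(mstep_probeCfg_iff hi).1 hs]
      exact .away hi
    · obtain ⟨pat, hpat, rfl⟩ := (mstep_probeCfg_top_iff hN).1 hs
      exact .write hpat (by omega)
  | away hi =>
    rw [(mstep_awayCfg_iff hi).1 hs]
    exact .compare hi
  | compare hi =>
    rw [(mstep_compareCfg_iff hi).1 hs]
    exact .probe hi
  | @write pat j hpat hj =>
    rcases j with _ | j
    · rw [(mstep_writeCfg_zero_iff hpat hN).1 hs]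
      exact .halt hpat
    · rw [(mstep_writeCfg_succ_iff hpat hj).1 hs]
      exact .write hpat (by omega)
  | halt => exact absurd hs not_mstep_haltCfg

lemma CanonReachable.of_reach (hN : 0 < N) {c : Cfg}
    (h : Relation.ReflTransGen (MStep (canonMachine N outs) itv) ⟨0, 0, initTape itv x⟩ c) :
    CanonReachable N outs itv x c := by
  induction h with
  | refl => exact probeCfg_zero (itv := itv) ▸ .probe (Nat.zero_le N)
  | tail _ hs ih => exact ih.mstep hN hs

lemma reach_probeCfg {i : ℕ} (hi : i ≤ N) : Relation.ReflTransGen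
    (MStep (canonMachine N outs) itv) ⟨0, 0, initTape itv x⟩ (probeCfg itv x i) := by
  induction i with
  | zero => rw [probeCfg_zero]
  | succ i ih =>
    have hi : i < N := by omega
    exact (((ih hi.le).tail ((mstep_probeCfg_iff hi).2 rfl)).tail
      ((mstep_awayCfg_iff hi).2 rfl)).tail ((mstep_compareCfg_iff hi).2 rfl)

lemma reach_haltCfg_of_writeCfg {pat : List Bool} (hpat : pat ∈ outs (itvSig itv N))
    (hN : 0 < N) {j : ℕ} (hj : j < N) : Relation.ReflTransGen
      (MStep (canonMachine N outs) itv) (writeCfg N itv x pat j) (haltCfg N itv x pat) := by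
  induction j with
  | zero => exact .single ((mstep_writeCfg_zero_iff hpat hN).2 rfl)
  | succ j ih => exact .head ((mstep_writeCfg_succ_iff hpat hj).2 rfl) (ih (by omega))

lemma outputs_canonMachine (hN : 0 < N) :
    Outputs (canonMachine N outs) itv x =
      {y | (outs (itvSig itv N) = [] ∧ y = probedTape itv x N) ∨
        ∃ pat ∈ outs (itvSig itv N), y = finalTape N itv x pat} := by
  ext y
  constructor
  · rintro ⟨c, hreach, hhalt, rfl⟩
    rw [halted_iff_forall_not_mstep itv] at hhalt
    cases CanonReachable.of_reach hN hreach with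
    | @probe i hi =>
      rcases hi.lt_or_eq with hi | rfl
      · exact absurd ((mstep_probeCfg_iff hi).2 rfl) (hhalt _)
      · refine .inl ⟨List.eq_nil_iff_forall_not_mem.2 fun pat hpat => ?_, rfl⟩
        exact hhalt _ ((mstep_probeCfg_top_iff hN).2 ⟨pat, hpat, rfl⟩)
    | away hi => exact absurd ((mstep_awayCfg_iff hi).2 rfl) (hhalt _)
    | compare hi => exact absurd ((mstep_compareCfg_iff hi).2 rfl) (hhalt _)
    | @write pat j hpat hj =>
      rcases j with _ | j
      · exact absurd ((mstep_writeCfg_zero_iff hpat hN).2 rfl) (hhalt _)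
      · exact absurd ((mstep_writeCfg_succ_iff hpat hj).2 rfl) (hhalt _)
    | halt hpat => exact .inr ⟨_, hpat, rfl⟩
  · rintro (⟨hnil, rfl⟩ | ⟨pat, hpat, rfl⟩)
    · refine ⟨_, reach_probeCfg le_rfl, (halted_iff_forall_not_mstep itv).2 fun c hs => ?_, rfl⟩
      obtain ⟨pat, hpat, -⟩ := (mstep_probeCfg_top_iff hN).1 hs
      simp [hnil] at hpat
    · have hwrite := (mstep_probeCfg_top_iff (x := x) hN).2 ⟨pat, hpat, rfl⟩
      refine ⟨_, ((reach_probeCfg le_rfl).tail hwrite).trans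
        (reach_haltCfg_of_writeCfg hpat hN (by omega)),
        (halted_iff_forall_not_mstep itv).2 fun _ => not_mstep_haltCfg, rfl⟩

lemma outputs_canonMachine_nonempty (hN : 0 < N) :
    (Outputs (canonMachine N outs) itv x).Nonempty := by
  rw [outputs_canonMachine hN]
  rcases houts : outs (itvSig itv N) with _ | ⟨pat, _⟩
  · exact ⟨_, .inl ⟨rfl, rfl⟩⟩
  · exact ⟨_, .inr ⟨pat, List.mem_cons_self, rfl⟩⟩

lemma forall_mem_outputs_canonMachine (hN : 0 < N) (hne : outs (itvSig itv N) ≠ [])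
    {P : (ℕ → Bool) → Prop} : (∀ y ∈ Outputs (canonMachine N outs) itv x, P y) ↔
      ∀ pat ∈ outs (itvSig itv N), P (finalTape N itv x pat) := by
  simp only [outputs_canonMachine hN, hne, false_and, false_or, Set.mem_ofPred_eq]
  exact ⟨fun h pat hpat => h _ ⟨pat, hpat, rfl⟩, by rintro h _ ⟨pat, hpat, rfl⟩; exact h pat hpat⟩

end CanonicalRun

section CanonicalModel

lemma Lint.eq_of_itvSig_eq {α α' : Lint} {N : ℕ} (hα : α.maxAtom < N) (hα' : α'.maxAtom < N)
    (h : itvSig α.itv N = itvSig α'.itv N) : α = α' :=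
  Lint.eq_of_itv_eq hα hα' fun i hi => by
    simpa [itvSig, hi] using congrArg (·[i]?) h

lemma maxAtom_lt_of_mem_condAnts {φ : LForm} {α : Lint} (hα : α ∈ φ.condAnts) :
    α.maxAtom < φ.maxAtom + 1 := by
  obtain ⟨⟨α, β⟩, hmem, rfl⟩ := List.mem_map.1 hα
  exact Nat.lt_succ_of_le (maxAtom_le_of_mem_condPairs hmem).1

def truncN (N : ℕ) (y : ℕ → Bool) : List Bool := (List.range N).map y

lemma eval_finalTape_truncN {N : ℕ} {α : Lint} {x z : ℕ → Bool} {β : PropForm}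
    (hβ : β.maxAtom < N) (hz : α.toProp.eval z = true) :
    β.eval (finalTape N α.itv x (truncN N z)) = β.eval z := by
  refine eval_congr fun m hm => ?_
  rcases hitv : α.itv m with _ | b
  · simp [finalTape, truncN, hitv, show m < N by omega]
  · rw [eval_toProp] at hz
    simp [finalTape, hitv, initTape, hz _ (Lint.itv_eq_some_iff.1 hitv)]

variable (φ : LForm) (w : Lint → PropForm → Bool)

noncomputable def outVals (α : Lint) : List (ℕ → Bool) :=
  Classical.epsilon (fun y => (posConj φ w α).eval y = true) ::
    ((consequents φ α).filter fun β => !w α β).map fun β =>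
      Classical.epsilon fun y => (PropForm.and (.neg β) (posConj φ w α)).eval y = true

open Classical in
noncomputable def outTable (sig : List (Option Bool)) : List (List Bool) :=
  ((φ.condAnts.find? fun α => itvSig α.itv (φ.maxAtom + 1) = sig).map fun α =>
    (outVals φ w α).map (truncN (φ.maxAtom + 1))).getD []

noncomputable def canonModel (v : ℕ → Bool) : CSM where
  T := canonMachine (φ.maxAtom + 1) (outTable φ w)
  x i := decide (i ≤ φ.maxAtom) && v i
  fin := (Set.finite_Iic φ.maxAtom).subset fun i hi => by simp_all

variable {φ w}

lemma outTable_itvSig {α : Lint} (hα : α ∈ φ.condAnts) :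
    outTable φ w (itvSig α.itv (φ.maxAtom + 1)) = (outVals φ w α).map (truncN (φ.maxAtom + 1)) := by
  have hsome : (φ.condAnts.find? fun α' =>
      itvSig α'.itv (φ.maxAtom + 1) = itvSig α.itv (φ.maxAtom + 1)).isSome :=
    List.find?_isSome.2 ⟨α, hα, by simp⟩
  obtain ⟨α', hfind⟩ := Option.isSome_iff_exists.1 hsome
  obtain rfl : α' = α :=
    Lint.eq_of_itvSig_eq (maxAtom_lt_of_mem_condAnts (List.mem_of_find?_eq_some hfind))
      (maxAtom_lt_of_mem_condAnts hα) (by simpa using List.find?_some hfind)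
  simp [outTable, hfind]

lemma eval_posConj_of_mem_outVals (hcoh : Coherent φ w) {α : Lint} (hα : α ∈ φ.condAnts)
    {z : ℕ → Bool} (hz : z ∈ outVals φ w α) : (posConj φ w α).eval z = true := by
  rcases List.mem_cons.1 hz with rfl | hz
  · exact Classical.epsilon_spec (hcoh α hα).1
  · obtain ⟨β, hβ, rfl⟩ := List.mem_map.1 hz
    have hβ' := List.mem_filter.1 hβ
    have := Classical.epsilon_spec ((hcoh α hα).2 β hβ'.1 (by simpa using hβ'.2))
    simp_all [PropForm.eval]

lemma forall_outVals_eval_iff (hcoh : Coherent φ w) {α : Lint} {β : PropForm}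
    (hmem : (α, β) ∈ φ.condPairs) : (∀ z ∈ outVals φ w α, β.eval z = true) ↔ w α β = true := by
  have hα : α ∈ φ.condAnts := List.mem_map.2 ⟨_, hmem, rfl⟩
  have hβ : β ∈ consequents φ α := mem_consequents.2 hmem
  constructor
  · intro h
    by_contra hwβ
    have hsat := (hcoh α hα).2 β hβ (by simpa using hwβ)
    have hmem' : Classical.epsilon (fun y => (PropForm.and (.neg β) (posConj φ w α)).eval y = true)
        ∈ outVals φ w α :=
      List.mem_cons_of_mem _ (List.mem_map.2 ⟨β, List.mem_filter.2 ⟨hβ, by simpa using hwβ⟩, rfl⟩)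
    have := Classical.epsilon_spec hsat
    simp_all [PropForm.eval]
  · intro hwβ z hz
    have := eval_posConj_of_mem_outVals hcoh hα hz
    rw [posConj, eval_foldr_and] at this
    exact this.2 β (List.mem_filter.2 ⟨hβ, hwβ⟩)

lemma sat_cond_canonModel_iff (hcoh : Coherent φ w) {v : ℕ → Bool} {α : Lint} {β : PropForm}
    (hmem : (α, β) ∈ φ.condPairs) :
    (∀ y ∈ Outputs (canonModel φ w v).T α.itv (canonModel φ w v).x, β.eval y = true) ↔
      w α β = true := by
  have hα : α ∈ φ.condAnts := List.mem_map.2 ⟨_, hmem, rfl⟩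
  have hβ : β.maxAtom < φ.maxAtom + 1 :=
    Nat.lt_succ_of_le (maxAtom_le_of_mem_condPairs hmem).2
  have hne : outTable φ w (itvSig α.itv (φ.maxAtom + 1)) ≠ [] := by
    simp [outTable_itvSig hα, outVals]
  rw [canonModel, forall_mem_outputs_canonMachine (by omega) hne, outTable_itvSig hα, List.forall_mem_map, ← forall_outVals_eval_iff hcoh hmem]
  refine forall₂_congr fun z hz => ?_
  have hzα := ((eval_foldr_and _ _ z).1 (eval_posConj_of_mem_outVals hcoh hα hz)).1
  rw [eval_finalTape_truncN hβ hzα]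

end CanonicalModel

lemma satGen_iff_evalA {O : Lint → Set (ℕ → Bool)} {x v : ℕ → Bool}
    {w : Lint → PropForm → Bool} {φ : LForm} (hatom : ∀ i ≤ φ.maxAtom, x i = v i)
    (hcond : ∀ p ∈ φ.condPairs, (∀ y ∈ O p.1, p.2.eval y = true) ↔ w p.1 p.2 = true) :
    SatGen O x φ ↔ φ.evalA v w = true := by
  induction φ with
  | atom i => simp [SatGen, LForm.evalA, hatom i le_rfl]
  | cond α β => exact hcond (α, β) (by simp [LForm.condPairs])
  | neg φ ih => simp [SatGen, LForm.evalA, ih hatom hcond]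
  | and φ ψ ihφ ihψ | or φ ψ ihφ ihψ =>
    simp only [LForm.maxAtom, le_max_iff, LForm.condPairs, List.mem_append] at hatom hcond
    simp [SatGen, LForm.evalA, ihφ (fun i hi => hatom i (.inl hi)) (fun p hp => hcond p (.inl hp)),
      ihψ (fun i hi => hatom i (.inr hi)) (fun p hp => hcond p (.inr hp))]

lemma exists_model_of_consistent {φ : LForm} (h : ¬ AXhalt (.neg φ)) :
    ∃ M : CSM, inMhalt M ∧ M.Sat φ := by
  obtain ⟨v, w, hφ, hcoh⟩ := exists_coherent_of_consistent h
  refine ⟨canonModel φ w v, fun _ _ _ => outputs_canonMachine_nonempty (by omega), ?_⟩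
  refine (satGen_iff_evalA (fun i hi => ?_) fun p hp => sat_cond_canonModel_iff hcoh hp).2 hφ
  simp [canonModel, hi]

/-- Completeness of `AX↓` for the class `M↓`: every `L`-formula
true in every model whose machine has at least one halting execution on every
input tape under every intervention is a theorem of `AX↓`; equivalently, every
`AX↓`-consistent formula is satisfied by some model in `M↓`. -/
theorem AXhalt_complete :
    (∀ φ : LForm, (∀ M : CSM, inMhalt M → M.Sat φ) → AXhalt φ) ∧
    (∀ φ : LForm, ¬ AXhalt (.neg φ) → ∃ M : CSM, inMhalt M ∧ M.Sat φ) := by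
  refine ⟨fun φ hvalid => by_contra fun hφ => ?_, fun _ => exists_model_of_consistent⟩
  obtain ⟨M, hM, hsat⟩ := exists_model_of_consistent fun h => hφ (.mp (.taut (taut_dne φ)) h)
  exact hsat (hvalid M hM)

end CausalSim
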